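/- arXiv:1410.2862 — 2 statements merged into one kernel-verified Lean document; each statement's English description precedes it below -/
import Mathlib

section
/- Let G be a 2-universal class of hash functions g : {0,1}^n → {0,1}^ℓ and X a random variable on {0,1}^n with min-entropy H∞(X) ≥ m. If G is chosen uniformly at random from 𝒢, independent of X, then the statistical distance between the joint distribution of (G(X), G) and (U_ℓ, G), where U_ℓ is uniform on {0,1}^ℓ independent of G, is at most (1/2)·√(2^(ℓ - m)). In particular, if ℓ ≤ m - 2·log₂(1/ε) + 2, this distance is at most ε. -/
/-!
The leftover hash lemma via collision probability. For a 2-universal family, the expected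
collision probability of `g X` exceeds the uniform value `1/|β|` by at most the collision
probability `∑ P x ^ 2 ≤ 2^(-m)` of `X`. The excess collision probability is exactly the squared
`L²` distance from uniform, and Cauchy–Schwarz over the `|𝒢|·|β|` points converts it into an
`L¹` bound.
-/

open Finset

namespace LeftoverHash

variable {α β : Type*} [Fintype α] [Fintype β] [DecidableEq β]

def pushforward (P : α → ℝ) (g : α → β) (y : β) : ℝ := ∑ x with g x = y, P x

def IsTwoUniversal (𝒢 : Finset (α → β)) : Prop :=
  ∀ x₁ x₂, x₁ ≠ x₂ → (#{g ∈ 𝒢 | g x₁ = g x₂} : ℝ) ≤ #𝒢 / Fintype.card β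

lemma sum_pushforward (P : α → ℝ) (g : α → β) : ∑ y, pushforward P g y = ∑ x, P x :=
  sum_fiberwise univ g P

lemma sum_pushforward_sq (P : α → ℝ) (g : α → β) :
    ∑ y, pushforward P g y ^ 2 = ∑ x, P x * pushforward P g (g x) := by
  rw [← sum_fiberwise univ g fun x => P x * pushforward P g (g x)]
  refine sum_congr rfl fun y _ => ?_
  rw [sq, pushforward, sum_mul]
  refine sum_congr rfl fun x hx => ?_
  rw [(mem_filter.1 hx).2, pushforward]

lemma sum_pushforward_apply_le (𝒢 : Finset (α → β)) (huniv : IsTwoUniversal 𝒢)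
    (P : α → ℝ) (hP : ∀ x, 0 ≤ P x) (hP1 : ∑ x, P x = 1) (x : α) :
    ∑ g ∈ 𝒢, pushforward P g (g x) ≤ #𝒢 * (P x + (Fintype.card β : ℝ)⁻¹) := by
  classical
  have hswap : ∑ g ∈ 𝒢, pushforward P g (g x) = ∑ x', #{g ∈ 𝒢 | g x' = g x} * P x' := by
    simp only [pushforward, sum_filter]
    rw [sum_comm]
    refine sum_congr rfl fun x' _ => ?_
    rw [← sum_filter, sum_const, nsmul_eq_mul]
  have hterm : ∀ x', (#{g ∈ 𝒢 | g x' = g x} : ℝ) * P x'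
      ≤ (if x' = x then #𝒢 * P x' else 0) + #𝒢 / Fintype.card β * P x' := by
    intro x'
    by_cases hx' : x' = x
    · subst hx'
      have hcard : (#{g ∈ 𝒢 | g x' = g x'} : ℝ) ≤ #𝒢 := by
        exact_mod_cast card_le_card (filter_subset _ _)
      have hspread := mul_nonneg (div_nonneg (#𝒢).cast_nonneg (Fintype.card β).cast_nonneg) (hP x')
      rw [if_pos rfl]
      exact (mul_le_mul_of_nonneg_right hcard (hP x')).trans (le_add_of_nonneg_right hspread)
    · simpa [hx'] using mul_le_mul_of_nonneg_right (huniv x' x hx') (hP x')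
  calc ∑ g ∈ 𝒢, pushforward P g (g x)
      ≤ ∑ x', ((if x' = x then #𝒢 * P x' else 0) + #𝒢 / Fintype.card β * P x') :=
        hswap ▸ sum_le_sum fun x' _ => hterm x'
    _ = #𝒢 * (P x + (Fintype.card β : ℝ)⁻¹) := by
        rw [sum_add_distrib, sum_ite_eq', if_pos (mem_univ x), ← mul_sum, hP1]
        ring

lemma sum_sum_pushforward_sq_le (𝒢 : Finset (α → β)) (huniv : IsTwoUniversal 𝒢)
    (P : α → ℝ) (hP : ∀ x, 0 ≤ P x) (hP1 : ∑ x, P x = 1) :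
    ∑ g ∈ 𝒢, ∑ y, pushforward P g y ^ 2
      ≤ #𝒢 * (∑ x, P x ^ 2 + (Fintype.card β : ℝ)⁻¹) := by
  calc ∑ g ∈ 𝒢, ∑ y, pushforward P g y ^ 2
      = ∑ x, P x * ∑ g ∈ 𝒢, pushforward P g (g x) := by
        simp only [sum_pushforward_sq, mul_sum]
        exact sum_comm
    _ ≤ ∑ x, P x * (#𝒢 * (P x + (Fintype.card β : ℝ)⁻¹)) :=
        sum_le_sum fun x _ =>
          mul_le_mul_of_nonneg_left (sum_pushforward_apply_le 𝒢 huniv P hP hP1 x) (hP x)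
    _ = ∑ x, (#𝒢 * P x ^ 2 + #𝒢 * (Fintype.card β : ℝ)⁻¹ * P x) :=
        sum_congr rfl fun x _ => by ring
    _ = #𝒢 * (∑ x, P x ^ 2 + (Fintype.card β : ℝ)⁻¹) := by
        rw [sum_add_distrib, ← mul_sum, ← mul_sum, hP1]
        ring

omit [DecidableEq β] in
lemma sum_sub_inv_card_sq {q : β → ℝ} (hq : ∑ y, q y = 1) :
    ∑ y, (q y - (Fintype.card β : ℝ)⁻¹) ^ 2 = ∑ y, q y ^ 2 - (Fintype.card β : ℝ)⁻¹ := by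
  have hc : (Fintype.card β : ℝ) * (Fintype.card β : ℝ)⁻¹ ^ 2 = (Fintype.card β : ℝ)⁻¹ := by
    rw [sq, ← mul_assoc, mul_comm (Fintype.card β : ℝ)]
    simpa only [inv_inv] using mul_inv_mul_cancel (Fintype.card β : ℝ)⁻¹
  simp only [sub_sq, sum_add_distrib, sum_sub_distrib, ← sum_mul, ← mul_sum, hq, sum_const,
    card_univ, nsmul_eq_mul, hc]
  ring

lemma sum_sum_abs_pushforward_sub_le (𝒢 : Finset (α → β)) (huniv : IsTwoUniversal 𝒢)
    (P : α → ℝ) (hP : ∀ x, 0 ≤ P x) (hP1 : ∑ x, P x = 1) :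
    ∑ g ∈ 𝒢, ∑ y, |pushforward P g y - (Fintype.card β : ℝ)⁻¹|
      ≤ #𝒢 * √(Fintype.card β * ∑ x, P x ^ 2) := by
  have hL2 : ∑ g ∈ 𝒢, ∑ y, (pushforward P g y - (Fintype.card β : ℝ)⁻¹) ^ 2
      ≤ #𝒢 * ∑ x, P x ^ 2 := by
    have := sum_sum_pushforward_sq_le 𝒢 huniv P hP hP1
    simp only [sum_sub_inv_card_sq ((sum_pushforward P _).trans hP1), sum_sub_distrib,
      sum_const, nsmul_eq_mul]
    linarith
  have hCS := sq_sum_le_card_mul_sum_sq (s := 𝒢 ×ˢ univ)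
    (f := fun gy : (α → β) × β => |pushforward P gy.1 gy.2 - (Fintype.card β : ℝ)⁻¹|)
  simp only [sum_product, sq_abs, card_product, card_univ, Nat.cast_mul] at hCS
  calc ∑ g ∈ 𝒢, ∑ y, |pushforward P g y - (Fintype.card β : ℝ)⁻¹|
      ≤ √(#𝒢 * Fintype.card β * (#𝒢 * ∑ x, P x ^ 2)) :=
        (le_abs_self _).trans <| Real.abs_le_sqrt <|
          hCS.trans (mul_le_mul_of_nonneg_left hL2 (by positivity))
    _ = #𝒢 * √(Fintype.card β * ∑ x, P x ^ 2) := by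
        rw [show (#𝒢 * Fintype.card β * (#𝒢 * ∑ x, P x ^ 2) : ℝ)
            = #𝒢 ^ 2 * (Fintype.card β * ∑ x, P x ^ 2) by ring,
          Real.sqrt_mul (by positivity), Real.sqrt_sq (by positivity)]

lemma half_sum_sum_abs_sub_uniform_le (𝒢 : Finset (α → β)) (huniv : IsTwoUniversal 𝒢)
    (P : α → ℝ) (hP : ∀ x, 0 ≤ P x) (hP1 : ∑ x, P x = 1) :
    1 / 2 * ∑ g ∈ 𝒢, ∑ y, |1 / #𝒢 * pushforward P g y - 1 / #𝒢 * (1 / Fintype.card β)|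
      ≤ 1 / 2 * √(Fintype.card β * ∑ x, P x ^ 2) := by
  simp only [← mul_sub, abs_mul, ← mul_sum, one_div]
  rw [abs_of_nonneg (by positivity)]
  gcongr
  calc (#𝒢 : ℝ)⁻¹ * ∑ g ∈ 𝒢, ∑ y, |pushforward P g y - (Fintype.card β : ℝ)⁻¹|
      ≤ (#𝒢 : ℝ)⁻¹ * (#𝒢 * √(Fintype.card β * ∑ x, P x ^ 2)) := by
        gcongr
        exact sum_sum_abs_pushforward_sub_le 𝒢 huniv P hP hP1
    _ ≤ √(Fintype.card β * ∑ x, P x ^ 2) := by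
        rw [← mul_assoc]
        exact mul_le_of_le_one_left (Real.sqrt_nonneg _) inv_mul_le_one

end LeftoverHash

lemma sum_sq_le_of_forall_le {ι : Type*} [Fintype ι] {P : ι → ℝ} {t : ℝ} (hP : ∀ x, 0 ≤ P x)
    (hP1 : ∑ x, P x = 1) (ht : ∀ x, P x ≤ t) : ∑ x, P x ^ 2 ≤ t :=
  calc ∑ x, P x ^ 2 ≤ ∑ x, t * P x :=
        sum_le_sum fun x _ => by rw [sq]; exact mul_le_mul_of_nonneg_right (ht x) (hP x)
    _ = t := by rw [← mul_sum, hP1, mul_one]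

lemma sqrt_two_rpow_le_two_mul {a ε : ℝ} (hε : 0 < ε)
    (h : a ≤ 2 - 2 * Real.logb 2 (1 / ε)) : √((2 : ℝ) ^ a) ≤ 2 * ε := by
  rw [Real.sqrt_eq_rpow, ← Real.rpow_mul zero_le_two]
  calc (2 : ℝ) ^ (a * (1 / 2)) ≤ 2 ^ (1 - Real.logb 2 (1 / ε)) :=
        Real.rpow_le_rpow_of_exponent_le one_le_two (by linarith)
    _ = 2 * ε := by
        rw [Real.rpow_sub two_pos, Real.rpow_one, Real.rpow_logb two_pos (by norm_num)
          (by positivity)]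
        field_simp

theorem stmt3_general (n ℓ : ℕ) (m ε : ℝ) (hε : 0 < ε)
    (𝒢 : Finset ((Fin n → Bool) → (Fin ℓ → Bool)))
    (huniv : ∀ x₁ x₂ : Fin n → Bool, x₁ ≠ x₂ →
      ((𝒢.filter (fun g => g x₁ = g x₂)).card : ℝ) ≤ (𝒢.card : ℝ) / 2 ^ ℓ)
    (P : (Fin n → Bool) → ℝ) (hP : ∀ x, 0 ≤ P x) (hP1 : ∑ x, P x = 1)
    (hmin : ∀ x, P x ≤ (2 : ℝ) ^ (-m)) :
    (1 / 2) * ∑ g ∈ 𝒢, ∑ y : Fin ℓ → Bool,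
        |(1 / (𝒢.card : ℝ)) * ∑ x ∈ Finset.univ.filter (fun x => g x = y), P x
          - (1 / (𝒢.card : ℝ)) * (1 / 2 ^ ℓ)|
      ≤ (1 / 2) * Real.sqrt ((2 : ℝ) ^ ((ℓ : ℝ) - m)) ∧
    ((ℓ : ℝ) ≤ m - 2 * Real.logb 2 (1 / ε) + 2 →
      (1 / 2) * ∑ g ∈ 𝒢, ∑ y : Fin ℓ → Bool,
        |(1 / (𝒢.card : ℝ)) * ∑ x ∈ Finset.univ.filter (fun x => g x = y), P x
          - (1 / (𝒢.card : ℝ)) * (1 / 2 ^ ℓ)| ≤ ε) := by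
  have hβ : (Fintype.card (Fin ℓ → Bool) : ℝ) = 2 ^ ℓ := by simp
  have hsqrt : √((2 : ℝ) ^ ℓ * ∑ x, P x ^ 2) ≤ √(2 ^ ((ℓ : ℝ) - m)) := by
    rw [sub_eq_add_neg, Real.rpow_add two_pos, Real.rpow_natCast]
    gcongr
    exact sum_sq_le_of_forall_le hP hP1 hmin
  have hdist := LeftoverHash.half_sum_sum_abs_sub_uniform_le 𝒢
    (fun x₁ x₂ h => hβ ▸ huniv x₁ x₂ h) P hP hP1
  rw [hβ] at hdist
  refine ⟨hdist.trans (by gcongr), fun hℓ => hdist.trans ?_⟩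
  linarith [hsqrt, sqrt_two_rpow_le_two_mul hε (a := ℓ - m) (by linarith)]

/-- Leftover-Hash Lemma: for a 2-universal class `𝒢` of hash functions
`g : {0,1}^n → {0,1}^ℓ` and a source `X` with min-entropy at least `m` (i.e. `P x ≤ 2^(-m)`
for all `x`), the statistical distance between `(G(X), G)` and `(U_ℓ, G)` for uniform `G ∈ 𝒢`
is at most `(1/2)·√(2^(ℓ-m))`; in particular it is at most `ε` when
`ℓ ≤ m - 2 log₂(1/ε) + 2`. -/
theorem stmt3 (n ℓ : ℕ) (m ε : ℝ) (hε : 0 < ε)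
    (𝒢 : Finset ((Fin n → Bool) → (Fin ℓ → Bool))) (h𝒢 : 𝒢.Nonempty)
    (huniv : ∀ x₁ x₂ : Fin n → Bool, x₁ ≠ x₂ →
      ((𝒢.filter (fun g => g x₁ = g x₂)).card : ℝ) ≤ (𝒢.card : ℝ) / 2 ^ ℓ)
    (P : (Fin n → Bool) → ℝ) (hP : ∀ x, 0 ≤ P x) (hP1 : ∑ x, P x = 1)
    (hmin : ∀ x, P x ≤ (2 : ℝ) ^ (-m)) :
    (1 / 2) * ∑ g ∈ 𝒢, ∑ y : Fin ℓ → Bool,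
        |(1 / (𝒢.card : ℝ)) * ∑ x ∈ Finset.univ.filter (fun x => g x = y), P x
          - (1 / (𝒢.card : ℝ)) * (1 / 2 ^ ℓ)|
      ≤ (1 / 2) * Real.sqrt ((2 : ℝ) ^ ((ℓ : ℝ) - m)) ∧
    ((ℓ : ℝ) ≤ m - 2 * Real.logb 2 (1 / ε) + 2 →
      (1 / 2) * ∑ g ∈ 𝒢, ∑ y : Fin ℓ → Bool,
        |(1 / (𝒢.card : ℝ)) * ∑ x ∈ Finset.univ.filter (fun x => g x = y), P x
          - (1 / (𝒢.card : ℝ)) * (1 / 2 ^ ℓ)| ≤ ε) :=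
  stmt3_general n ℓ m ε hε 𝒢 huniv P hP hP1 hmin
end

section
/- For a probability distribution P on a finite alphabet 𝒳 and ε > 0, |T_{P,ε}^n| ≥ (1 − 2|𝒳|·exp(−nε²/2))·exp(nH(P) − nεD), where D = Σ_{x : P(x)≠0} (−log P(x)). -/
/-!
A sequence `xs` in the typical set has probability
`∏ i, P (xs i) = exp (∑ x, N(x|xs) log P x) ≤ exp (-n H(P) + n ε D)`, since `N(x|xs) ≥ n P x - ε n`
and `log P x ≤ 0`. On the other hand, Hoeffding's lemma for a Bernoulli variable bounds the
moment generating function of `N(x|xs) - n P x` by `exp (n t² / 8)`, so by Chernoff the event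
`|N(x|xs) - n P x| > ε n` has mass at most `2 exp (-2 n ε²)`. A union bound over the letters
gives the typical set mass at least `1 - 2 |𝒳| exp (-2 n ε²)`, and comparing with the bound on
each of its elements gives the lower bound on its cardinality.
-/

open Finset Real ProbabilityTheory MeasureTheory

lemma one_sub_add_mul_exp_le {p : ℝ} (hp0 : 0 ≤ p) (hp1 : p ≤ 1) (t : ℝ) :
    1 - p + p * exp t ≤ exp (p * t + t ^ 2 / 8) := by
  let X : Bool → ℝ := fun b => if b then 1 else 0
  have hoeffding := (hasSubgaussianMGF_of_mem_Icc (μ := Ber(true, false, ⟨p, hp0, hp1⟩)) (X := X)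
    (a := 0) (b := 1) (by fun_prop) (ae_of_all _ fun b => by cases b <;> simp [X])).mgf_le t
  simp only [mgf, integral_bernoulliMeasure, X] at hoeffding
  norm_num at hoeffding
  calc 1 - p + p * exp t = exp (p * t) * (p * exp (t * (1 - p)) + (1 - p) * exp (-(t * p))) := by
        rw [mul_add, mul_left_comm, ← exp_add, mul_left_comm, ← exp_add]
        ring_nf
        rw [exp_zero]
        ring
    _ ≤ exp (p * t) * exp (t ^ 2 / 8) := by gcongr; exact hoeffding.trans_eq (by ring_nf)
    _ = exp (p * t + t ^ 2 / 8) := (exp_add _ _).symm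

variable {α : Type*} [Fintype α] {n : ℕ} {P : α → ℝ}

noncomputable def typicalSet [DecidableEq α] (P : α → ℝ) (ε : ℝ) (n : ℕ) : Finset (Fin n → α) :=
  {xs | ∀ x, |(#{i | xs i = x} : ℝ) - n * P x| ≤ ε * n ∧ (P x = 0 → #{i | xs i = x} = 0)}

lemma sum_prod_eq_one (hP1 : ∑ x, P x = 1) : ∑ xs : Fin n → α, ∏ i, P (xs i) = 1 := by
  rw [← Fintype.sum_pow, hP1, one_pow]

lemma sum_prod_mul_exp_count [DecidableEq α] (hP1 : ∑ x, P x = 1) (x : α) (t : ℝ) :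
    ∑ xs : Fin n → α, (∏ i, P (xs i)) * exp (t * #{i | xs i = x}) =
      (1 - P x + P x * exp t) ^ n := by
  have hfactor (xs : Fin n → α) : (∏ i, P (xs i)) * exp (t * #{i | xs i = x}) =
      ∏ i, P (xs i) * exp (t * if xs i = x then 1 else 0) := by
    rw [prod_mul_distrib, ← exp_sum, ← mul_sum, card_filter]
    push_cast
    rfl
  have hterm (y : α) : P y * exp (t * if y = x then 1 else 0) =
      P y + if x = y then P x * (exp t - 1) else 0 := by
    by_cases h : y = x
    · subst h; simp; ring
    · simp [h, Ne.symm h]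
  simp_rw [hfactor, ← Fintype.sum_pow (fun y => P y * exp (t * if y = x then 1 else 0)), hterm,
    sum_add_distrib, sum_ite_eq, if_pos (mem_univ x), hP1]
  ring

lemma sum_prod_mul_exp_deviation_le [DecidableEq α] (hP : ∀ x, 0 ≤ P x) (hP1 : ∑ x, P x = 1)
    (x : α) (t : ℝ) :
    ∑ xs : Fin n → α, (∏ i, P (xs i)) * exp (t * (#{i | xs i = x} - n * P x)) ≤
      exp (n * t ^ 2 / 8) := by
  have hPx : P x ≤ 1 := (single_le_sum (fun y _ => hP y) (mem_univ x)).trans_eq hP1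
  calc ∑ xs : Fin n → α, (∏ i, P (xs i)) * exp (t * (#{i | xs i = x} - n * P x))
      = exp (-(t * n * P x)) * ∑ xs : Fin n → α, (∏ i, P (xs i)) * exp (t * #{i | xs i = x}) := by
        rw [mul_sum]
        refine sum_congr rfl fun xs _ => ?_
        rw [mul_sub, sub_eq_add_neg, exp_add]
        ring_nf
    _ = exp (-(t * n * P x)) * (1 - P x + P x * exp t) ^ n := by rw [sum_prod_mul_exp_count hP1]
    _ ≤ exp (-(t * n * P x)) * exp (P x * t + t ^ 2 / 8) ^ n := by
        gcongr
        · nlinarith [exp_pos t, hP x]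
        · exact one_sub_add_mul_exp_le (hP x) hPx t
    _ = exp (n * t ^ 2 / 8) := by
        rw [← exp_nat_mul, ← exp_add]
        ring_nf

lemma sum_prod_deviation_le [DecidableEq α] (hP : ∀ x, 0 ≤ P x) (hP1 : ∑ x, P x = 1) (x : α)
    {ε : ℝ} (hε : 0 ≤ ε) :
    ∑ xs : Fin n → α with ε * n < |(#{i | xs i = x} : ℝ) - n * P x|, ∏ i, P (xs i) ≤
      2 * exp (-2 * n * ε ^ 2) := by
  set d : (Fin n → α) → ℝ := fun xs => #{i | xs i = x} - n * P x
  set w : (Fin n → α) → ℝ := fun xs => exp (4 * ε * d xs - 4 * n * ε ^ 2) +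
    exp (-4 * ε * d xs - 4 * n * ε ^ 2)
  have hmass (xs : Fin n → α) : 0 ≤ ∏ i, P (xs i) := prod_nonneg fun i _ => hP _
  -- Chernoff: a large deviation of either sign makes one of the two exponents nonnegative.
  have hw (xs : Fin n → α) (hxs : ε * n < |d xs|) : 1 ≤ w xs := by
    rcases lt_abs.mp hxs with h | h
    · linarith [one_le_exp (show 0 ≤ 4 * ε * d xs - 4 * n * ε ^ 2 by nlinarith),
        exp_pos (-4 * ε * d xs - 4 * n * ε ^ 2)]
    · linarith [one_le_exp (show 0 ≤ -4 * ε * d xs - 4 * n * ε ^ 2 by nlinarith),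
        exp_pos (4 * ε * d xs - 4 * n * ε ^ 2)]
  calc ∑ xs with ε * n < |d xs|, ∏ i, P (xs i)
      ≤ ∑ xs with ε * n < |d xs|, (∏ i, P (xs i)) * w xs :=
        sum_le_sum fun xs hxs => le_mul_of_one_le_right (hmass xs) (hw xs (mem_filter.mp hxs).2)
    _ ≤ ∑ xs, (∏ i, P (xs i)) * w xs :=
        sum_le_sum_of_subset_of_nonneg (filter_subset _ _) fun xs _ _ =>
          mul_nonneg (hmass xs) (by positivity)
    _ = exp (-(4 * n * ε ^ 2)) * (∑ xs, (∏ i, P (xs i)) * exp (4 * ε * d xs) +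
          ∑ xs, (∏ i, P (xs i)) * exp (-4 * ε * d xs)) := by
        rw [← sum_add_distrib, mul_sum]
        refine sum_congr rfl fun xs _ => ?_
        simp only [w, sub_eq_add_neg, exp_add]
        ring
    _ ≤ exp (-(4 * n * ε ^ 2)) * (exp (n * (4 * ε) ^ 2 / 8) + exp (n * (-4 * ε) ^ 2 / 8)) := by
        gcongr
        · exact sum_prod_mul_exp_deviation_le hP hP1 x _
        · exact sum_prod_mul_exp_deviation_le hP hP1 x _
    _ = 2 * exp (-2 * n * ε ^ 2) := by
        rw [mul_add, ← exp_add, ← exp_add]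
        ring_nf

lemma prod_le_of_mem_typicalSet [DecidableEq α] (hP : ∀ x, 0 ≤ P x) (hP1 : ∑ x, P x = 1)
    {ε : ℝ} {xs : Fin n → α} (hxs : xs ∈ typicalSet P ε n) :
    ∏ i, P (xs i) ≤
      exp (n * ε * ∑ x with P x ≠ 0, -log (P x) - n * ∑ x, -(P x * log (P x))) := by
  simp only [typicalSet, mem_filter, mem_univ, true_and] at hxs
  have hpos (i : Fin n) : 0 < P (xs i) := by
    refine (hP _).lt_of_ne fun h => ?_
    have := (hxs (xs i)).2 h.symm
    rw [card_eq_zero, filter_eq_empty_iff] at this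
    exact this (mem_univ i) rfl
  have hlog : ∏ i, P (xs i) = exp (∑ x, #{i | xs i = x} * log (P x)) := by
    rw [← prod_congr rfl fun i _ => exp_log (hpos i), ← exp_sum,
      ← sum_fiberwise' univ xs fun x => log (P x)]
    simp only [sum_const, nsmul_eq_mul]
  -- `log 0 = 0`, so the restriction to the support of `P` in the constant is immaterial.
  have hconst : n * ε * ∑ x with P x ≠ 0, -log (P x) - n * ∑ x, -(P x * log (P x)) =
      ∑ x, (n * P x - ε * n) * log (P x) := by
    have hsupp : ∑ x with P x ≠ 0, -log (P x) = ∑ x, -log (P x) :=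
      sum_filter_of_ne fun x _ h hx => h (by rw [hx, log_zero, neg_zero])
    rw [hsupp, mul_sum, mul_sum, ← sum_sub_distrib]
    exact sum_congr rfl fun x _ => by ring
  rw [hlog, hconst, exp_le_exp]
  refine sum_le_sum fun x _ => mul_le_mul_of_nonpos_right ?_ ?_
  · linarith [(abs_le.mp (hxs x).1).1]
  · exact log_nonpos (hP x) ((single_le_sum (fun y _ => hP y) (mem_univ x)).trans_eq hP1)

lemma sum_prod_compl_typicalSet_le [DecidableEq α] (hP : ∀ x, 0 ≤ P x) (hP1 : ∑ x, P x = 1)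
    {ε : ℝ} (hε : 0 ≤ ε) :
    ∑ xs ∈ (typicalSet P ε n)ᶜ, ∏ i, P (xs i) ≤ 2 * Fintype.card α * exp (-2 * n * ε ^ 2) := by
  set dev : α → (Fin n → α) → Prop := fun x xs => ε * n < |(#{i | xs i = x} : ℝ) - n * P x|
  have hmass (xs : Fin n → α) : 0 ≤ ∏ i, P (xs i) := prod_nonneg fun i _ => hP _
  have hunion (xs : Fin n → α) (hxs : xs ∈ (typicalSet P ε n)ᶜ) :
      ∏ i, P (xs i) ≤ ∑ x, if dev x xs then ∏ i, P (xs i) else 0 := by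
    have hite_nonneg (x : α) : 0 ≤ if dev x xs then ∏ i, P (xs i) else 0 :=
      ite_nonneg (hmass xs) le_rfl
    simp only [typicalSet, mem_compl, mem_filter, mem_univ, true_and, not_forall, not_and] at hxs
    obtain ⟨x, hx⟩ := hxs
    by_cases hdev : dev x xs
    · exact (if_pos hdev).symm.le.trans
        (single_le_sum (fun y _ => hite_nonneg y) (mem_univ x))
    -- Otherwise `x` is a letter of `xs` with `P x = 0`, so `xs` has mass zero.
    obtain ⟨hPx, hcount⟩ := hx (not_lt.mp hdev)
    obtain ⟨i, hi⟩ := card_ne_zero.mp hcount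
    rw [prod_eq_zero (mem_univ i) (by rw [(mem_filter.mp hi).2, hPx])] at hite_nonneg ⊢
    exact sum_nonneg fun y _ => hite_nonneg y
  calc ∑ xs ∈ (typicalSet P ε n)ᶜ, ∏ i, P (xs i)
      ≤ ∑ xs ∈ (typicalSet P ε n)ᶜ, ∑ x, if dev x xs then ∏ i, P (xs i) else 0 :=
        sum_le_sum hunion
    _ ≤ ∑ xs, ∑ x, if dev x xs then ∏ i, P (xs i) else 0 :=
        sum_le_sum_of_subset_of_nonneg (subset_univ _) fun xs _ _ =>
          sum_nonneg fun x _ => ite_nonneg (hmass xs) le_rfl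
    _ = ∑ x, ∑ xs with dev x xs, ∏ i, P (xs i) := by
        rw [sum_comm]
        simp_rw [sum_filter]
    _ ≤ ∑ _x : α, 2 * exp (-2 * n * ε ^ 2) :=
        sum_le_sum fun x _ => sum_prod_deviation_le hP hP1 x hε
    _ = 2 * Fintype.card α * exp (-2 * n * ε ^ 2) := by
        rw [sum_const, card_univ, nsmul_eq_mul]
        ring

lemma le_card_typicalSet [DecidableEq α] (hP : ∀ x, 0 ≤ P x) (hP1 : ∑ x, P x = 1)
    {ε : ℝ} (hε : 0 ≤ ε) :
    (1 - 2 * Fintype.card α * exp (-2 * n * ε ^ 2)) *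
        exp (n * ∑ x, -(P x * log (P x)) - n * ε * ∑ x with P x ≠ 0, -log (P x)) ≤
      #(typicalSet P ε n) := by
  set E := n * ε * ∑ x with P x ≠ 0, -log (P x) - n * ∑ x, -(P x * log (P x))
  have hupper : ∑ xs ∈ typicalSet P ε n, ∏ i, P (xs i) ≤ #(typicalSet P ε n) * exp E :=
    (sum_le_card_nsmul _ _ _ fun xs hxs => prod_le_of_mem_typicalSet hP hP1 hxs).trans_eq
      (nsmul_eq_mul _ _)
  have hlower : 1 - 2 * Fintype.card α * exp (-2 * n * ε ^ 2) ≤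
      ∑ xs ∈ typicalSet P ε n, ∏ i, P (xs i) := by
    have := sum_add_sum_compl (typicalSet P ε n) fun xs => ∏ i, P (xs i)
    rw [sum_prod_eq_one hP1] at this
    linarith [sum_prod_compl_typicalSet_le hP hP1 (n := n) hε]
  rw [show n * ∑ x, -(P x * log (P x)) - n * ε * ∑ x with P x ≠ 0, -log (P x) = -E by ring,
    exp_neg, ← div_eq_mul_inv, div_le_iff₀ (exp_pos E)]
  linarith

/-- Lower bound on the cardinality of the `ε`-typical set:
`|T_{P,ε}^n| ≥ (1 - 2|𝒳|·exp(-nε²/2))·exp(nH(P) - nεD)` with `D = ∑_{x : P(x)≠0} (-log P(x))`. -/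
theorem stmt6 (k n : ℕ) (ε : ℝ) (hε : 0 < ε) (P : Fin k → ℝ)
    (hP : ∀ x, 0 ≤ P x) (hP1 : ∑ x, P x = 1) :
    (((Finset.univ.filter (fun xs : Fin n → Fin k =>
        ∀ x, |((Finset.univ.filter (fun i => xs i = x)).card : ℝ) - n * P x| ≤ ε * n ∧
          (P x = 0 → (Finset.univ.filter (fun i => xs i = x)).card = 0))).card : ℝ))
      ≥ (1 - 2 * k * Real.exp (-(n : ℝ) * ε ^ 2 / 2)) *
        Real.exp ((n : ℝ) * (∑ x, -(P x * Real.log (P x)))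
          - (n : ℝ) * ε * (∑ x ∈ Finset.univ.filter (fun x => P x ≠ 0), -Real.log (P x))) := by
  have hcard := le_card_typicalSet (n := n) hP hP1 hε.le
  rw [Fintype.card_fin] at hcard
  -- `congr` reconciles the `Decidable` instances of `∀ x : Fin k` (`Fin` versus `Fintype`).
  refine ge_iff_le.mpr (le_trans ?_ (hcard.trans_eq (by unfold typicalSet; congr)))
  gcongr
  nlinarith [sq_nonneg ε, n.cast_nonneg (α := ℝ)]
end
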